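/- Let v be a unit complex column vector of length n, and let V̄ ∈ ℂ^{n×(n−1)} have orthonormal columns each orthogonal to the conjugate structure so that [v, V̄] is unitary. Then the (n+1)×(n+1) block matrix Θ = [[0, vᵀ],[v, V̄ V̄ᵀ]] is unitary and symmetric. -/
import Mathlib
open Matrix

theorem stmt_10 (m : ℕ) (v : Fin (m + 1) → ℂ) (Vbar : Matrix (Fin (m + 1)) (Fin m) ℂ)
    (hU : (Matrix.of fun i j => Fin.cases (v i) (fun j' => Vbar i j') j :
        Matrix (Fin (m + 1)) (Fin (m + 1)) ℂ)ᴴ *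
      (Matrix.of fun i j => Fin.cases (v i) (fun j' => Vbar i j') j) = 1) :
    (Matrix.of fun i j =>
        Fin.cases (Fin.cases 0 v j)
          (fun i' => Fin.cases (v i') (fun j' => (Vbar * Vbarᵀ) i' j') j) i :
      Matrix (Fin (m + 2)) (Fin (m + 2)) ℂ)ᴴ *
      (Matrix.of fun i j =>
        Fin.cases (Fin.cases 0 v j)
          (fun i' => Fin.cases (v i') (fun j' => (Vbar * Vbarᵀ) i' j') j) i) = 1 ∧
    (Matrix.of fun i j =>
        Fin.cases (Fin.cases 0 v j)
          (fun i' => Fin.cases (v i') (fun j' => (Vbar * Vbarᵀ) i' j') j) i :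
      Matrix (Fin (m + 2)) (Fin (m + 2)) ℂ)ᵀ =
      Matrix.of fun i j =>
        Fin.cases (Fin.cases 0 v j)
          (fun i' => Fin.cases (v i') (fun j' => (Vbar * Vbarᵀ) i' j') j) i := by
  have hA : ∑ l, (starRingEnd ℂ) (v l) * v l = 1 := by
    have := congrFun (congrFun hU 0) 0
    simpa [Matrix.mul_apply, Matrix.conjTranspose_apply, Matrix.one_apply] using this
  have hB : ∀ j, ∑ l, (starRingEnd ℂ) (Vbar l j) * v l = 0 := by
    intro j
    have := congrFun (congrFun hU j.succ) 0
    simpa [Matrix.mul_apply, Matrix.conjTranspose_apply, Matrix.one_apply] using this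
  have hB' : ∀ j, ∑ l, Vbar l j * (starRingEnd ℂ) (v l) = 0 := by
    intro j
    have h := congrArg (starRingEnd ℂ) (hB j)
    simpa [map_sum] using h
  have hC : ∀ a b, ∑ l, (starRingEnd ℂ) (Vbar l a) * Vbar l b = if a = b then 1 else 0 := by
    intro a b
    have := congrFun (congrFun hU a.succ) b.succ
    simpa [Matrix.mul_apply, Matrix.conjTranspose_apply, Matrix.one_apply] using this
  have hVV : (Matrix.of fun i j => Fin.cases (v i) (fun j' => Vbar i j') j :
        Matrix (Fin (m + 1)) (Fin (m + 1)) ℂ) *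
      (Matrix.of fun i j => Fin.cases (v i) (fun j' => Vbar i j') j)ᴴ = 1 :=
    mul_eq_one_comm.mp hU
  have hD : ∀ i k, v i * (starRingEnd ℂ) (v k) +
      ∑ j, Vbar i j * (starRingEnd ℂ) (Vbar k j) = if i = k then 1 else 0 := by
    intro i k
    have := congrFun (congrFun hVV i) k
    simpa [Matrix.mul_apply, Matrix.conjTranspose_apply, Matrix.one_apply,
      Fin.sum_univ_succ] using this
  constructor
  · ext i k
    rw [Matrix.mul_apply, Fin.sum_univ_succ]
    simp only [Matrix.conjTranspose_apply, Matrix.of_apply, Fin.cases_zero, Fin.cases_succ,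
      RCLike.star_def]
    refine Fin.cases ?_ (fun i' => ?_) i <;> refine Fin.cases ?_ (fun k' => ?_) k <;>
      simp only [Fin.cases_zero, Fin.cases_succ, map_zero, zero_mul, mul_zero, zero_add, add_zero]
    · -- i = 0, k = 0
      rw [hA]; simp [Matrix.one_apply]
    · -- i = 0, k = succ k'
      have key : ∑ l, (starRingEnd ℂ) (v l) * (Vbar * Vbarᵀ) l k' = 0 := by
        calc ∑ l, (starRingEnd ℂ) (v l) * (Vbar * Vbarᵀ) l k'
            = ∑ l, ∑ j, (starRingEnd ℂ) (v l) * (Vbar l j * Vbar k' j) := by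
              simp_rw [Matrix.mul_apply, Matrix.transpose_apply, Finset.mul_sum]
          _ = ∑ j, ∑ l, (starRingEnd ℂ) (v l) * (Vbar l j * Vbar k' j) := Finset.sum_comm
          _ = 0 := by
              refine Finset.sum_eq_zero fun j _ => ?_
              calc ∑ l, (starRingEnd ℂ) (v l) * (Vbar l j * Vbar k' j)
                  = (∑ l, Vbar l j * (starRingEnd ℂ) (v l)) * Vbar k' j := by
                    rw [Finset.sum_mul]; exact Finset.sum_congr rfl fun l _ => by ring
                _ = 0 := by rw [hB']; ring
      rw [key]; simp [Matrix.one_apply, (Fin.succ_ne_zero k').symm]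
    · -- i = succ i', k = 0
      have key : ∑ l, (starRingEnd ℂ) ((Vbar * Vbarᵀ) l i') * v l = 0 := by
        calc ∑ l, (starRingEnd ℂ) ((Vbar * Vbarᵀ) l i') * v l
            = ∑ l, ∑ j, (starRingEnd ℂ) (Vbar l j) * (starRingEnd ℂ) (Vbar i' j) * v l := by
              simp_rw [Matrix.mul_apply, Matrix.transpose_apply, map_sum, _root_.map_mul,
                Finset.sum_mul]
          _ = ∑ j, ∑ l, (starRingEnd ℂ) (Vbar l j) * (starRingEnd ℂ) (Vbar i' j) * v l :=
              Finset.sum_comm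
          _ = 0 := by
              refine Finset.sum_eq_zero fun j _ => ?_
              calc ∑ l, (starRingEnd ℂ) (Vbar l j) * (starRingEnd ℂ) (Vbar i' j) * v l
                  = (starRingEnd ℂ) (Vbar i' j) * ∑ l, (starRingEnd ℂ) (Vbar l j) * v l := by
                    rw [Finset.mul_sum]; exact Finset.sum_congr rfl fun l _ => by ring
                _ = 0 := by rw [hB]; ring
      rw [key]; simp [Matrix.one_apply, Fin.succ_ne_zero i']
    · -- i = succ i', k = succ k'
      have key : ∑ l, (starRingEnd ℂ) ((Vbar * Vbarᵀ) l i') * (Vbar * Vbarᵀ) l k'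
          = ∑ a, (starRingEnd ℂ) (Vbar i' a) * Vbar k' a := by
        calc ∑ l, (starRingEnd ℂ) ((Vbar * Vbarᵀ) l i') * (Vbar * Vbarᵀ) l k'
            = ∑ l, ∑ a, ∑ b, ((starRingEnd ℂ) (Vbar l a) * (starRingEnd ℂ) (Vbar i' a)) *
                (Vbar l b * Vbar k' b) := by
              simp_rw [Matrix.mul_apply, Matrix.transpose_apply, map_sum, _root_.map_mul,
                Finset.sum_mul, Finset.mul_sum]
          _ = ∑ a, ∑ b, ∑ l, ((starRingEnd ℂ) (Vbar l a) * (starRingEnd ℂ) (Vbar i' a)) *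
                (Vbar l b * Vbar k' b) := by
              rw [Finset.sum_comm]
              exact Finset.sum_congr rfl fun a _ => Finset.sum_comm
          _ = ∑ a, ∑ b, ((starRingEnd ℂ) (Vbar i' a) * Vbar k' b) *
                ∑ l, (starRingEnd ℂ) (Vbar l a) * Vbar l b := by
              refine Finset.sum_congr rfl fun a _ => Finset.sum_congr rfl fun b _ => ?_
              rw [Finset.mul_sum]; exact Finset.sum_congr rfl fun l _ => by ring
          _ = ∑ a, ∑ b, ((starRingEnd ℂ) (Vbar i' a) * Vbar k' b) *
                (if a = b then 1 else 0) := by simp_rw [hC]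
          _ = ∑ a, (starRingEnd ℂ) (Vbar i' a) * Vbar k' a := by simp
      rw [key]
      have h := hD k' i'
      have h2 : (starRingEnd ℂ) (v i') * v k' + ∑ a, (starRingEnd ℂ) (Vbar i' a) * Vbar k' a
          = if k' = i' then 1 else 0 := by
        rw [← h]; congr 1
        · ring
        · exact Finset.sum_congr rfl fun a _ => by ring
      rw [h2]
      simp [Matrix.one_apply, Fin.succ_inj, eq_comm]
  · ext i k
    simp only [Matrix.transpose_apply, Matrix.of_apply]
    refine Fin.cases ?_ (fun i' => ?_) i <;> refine Fin.cases ?_ (fun k' => ?_) k <;>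
      simp only [Fin.cases_zero, Fin.cases_succ]
    rw [Matrix.mul_apply, Matrix.mul_apply]
    exact Finset.sum_congr rfl fun a _ => by simp only [Matrix.transpose_apply]; ring
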